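/- arXiv:1609.03155 — 3 statements merged into one kernel-verified Lean document; each statement's English description precedes it below -/
import Mathlib

section
/- Let s : D → D be an involution on a type D and let m : D →₀ ℕ be an s-invariant finitely supported function. Suppose every fixed point y of s in the support of m has m(y) odd. Then (∀ y ∈ support m, s y ≠ y) if and only if there exists a finite multiset L of pairs (x, s x) with x ≠ s x whose sum is m, i.e. m = Σ_{(x, s x) ∈ L} (δ_x + δ_{s x}). -/
private lemma stmt5_aux {D : Type*} (s : D → D) (hs : ∀ x, s (s x) = x) :
    ∀ N (m : D →₀ ℕ), (m.sum fun _ n => n) = N → (∀ x, m (s x) = m x) →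
      (∀ y ∈ m.support, s y ≠ y) →
      ∃ L : List D, (∀ x ∈ L, s x ≠ x) ∧
        m = (L.map (fun x => Finsupp.single x 1 + Finsupp.single (s x) 1)).sum := by
  classical
  intro N
  induction N using Nat.strong_induction_on with
  | _ N ih =>
    intro m hN hm hfix
    rcases eq_or_ne m 0 with rfl | hne
    · exact ⟨[], by simp, by simp⟩
    · obtain ⟨x, hx⟩ := Finsupp.support_nonempty_iff.mpr hne
      have hxne : s x ≠ x := hfix x hx
      have hmx : 1 ≤ m x := Nat.one_le_iff_ne_zero.mpr (Finsupp.mem_support_iff.mp hx)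
      set p : D →₀ ℕ := Finsupp.single x 1 + Finsupp.single (s x) 1 with hp
      have hpval : ∀ a, p a = (if x = a then 1 else 0) + (if s x = a then 1 else 0) := by
        intro a
        rw [hp, Finsupp.add_apply, Finsupp.single_apply, Finsupp.single_apply]
      have hple : p ≤ m := by
        intro a
        rcases eq_or_ne a x with rfl | h1
        · simpa [hpval a, hxne] using hmx
        · rcases eq_or_ne a (s x) with rfl | h2
          · have h3 : 1 ≤ m (s x) := by rw [hm]; exact hmx
            have h4 : x ≠ s x := fun h => hxne h.symm
            simpa [hpval (s x), h4] using h3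
          · simp [hpval a, Ne.symm h1, Ne.symm h2]
      have hsplit : p + (m - p) = m := add_tsub_cancel_of_le hple
      set m' := m - p with hm'
      have hm'val : ∀ a, m' a = m a - p a := fun a => rfl
      have hminv : ∀ a, m' (s a) = m' a := by
        intro a
        have hps : p (s a) = p a := by
          rw [hpval, hpval]
          have e1 : (x = s a) ↔ (s x = a) := by
            constructor
            · intro h; rw [h, hs]
            · intro h; rw [← h, hs]
          have e2 : (s x = s a) ↔ (x = a) := by
            constructor
            · intro h; have := congrArg s h; rwa [hs, hs] at this
            · intro h; rw [h]
          rw [if_congr e1 rfl rfl, if_congr e2 rfl rfl, Nat.add_comm]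
        rw [hm'val, hm'val, hps, hm a]
      have hmfix : ∀ y ∈ m'.support, s y ≠ y := by
        intro y hy
        apply hfix
        rw [Finsupp.mem_support_iff] at hy ⊢
        intro h0
        exact hy (by rw [hm'val, h0]; simp)
      have hpsum : (p.sum fun _ n => n) = 2 := by
        rw [hp, Finsupp.sum_add_index (by simp) (by intros; rfl)]
        simp
      have hsum : (m'.sum fun _ n => n) + 2 = N := by
        have h := congrArg (fun f : D →₀ ℕ => f.sum fun _ n => n) hsplit
        rw [Finsupp.sum_add_index (by simp) (by intros; rfl), hpsum] at h
        omega
      have hlt : (m'.sum fun _ n => n) < N := by omega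
      obtain ⟨L, hL1, hL2⟩ := ih _ hlt m' rfl hminv hmfix
      refine ⟨x :: L, ?_, ?_⟩
      · intro a ha
        rcases List.mem_cons.mp ha with rfl | ha
        · exact hxne
        · exact hL1 a ha
      · rw [List.map_cons, List.sum_cons, ← hL2, ← hp, hsplit]

private lemma stmt5_aux2 {D : Type*} (s : D → D) (hs : ∀ x, s (s x) = x)
    (y : D) (hyfix : s y = y) :
    ∀ L : List D, (∀ x ∈ L, s x ≠ x) →
      ((L.map (fun x => (Finsupp.single x 1 + Finsupp.single (s x) 1 : D →₀ ℕ))).sum) y = 0 := by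
  classical
  intro L
  induction L with
  | nil => simp
  | cons a L ihL =>
    intro hL
    have ha := hL a List.mem_cons_self
    have h1 : a ≠ y := by rintro rfl; exact ha hyfix
    have h2 : s a ≠ y := by
      rintro rfl
      exact ha (by rw [← hyfix, hs])
    rw [List.map_cons, List.sum_cons, Finsupp.add_apply,
      ihL (fun b hb => hL b (List.mem_cons_of_mem _ hb))]
    simp [Finsupp.single_apply, h1, h2]

/-- For an `s`-invariant multiplicity function all of whose `s`-fixed support points have
odd multiplicity: there are no `s`-fixed points in the support iff `m` is a sum of orbit
pairs `{x, s x}` with `s x ≠ x`. -/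
theorem stmt5 {D : Type*} (s : D → D) (hs : ∀ x, s (s x) = x)
    (m : D →₀ ℕ) (hm : ∀ x, m (s x) = m x)
    (hodd : ∀ y ∈ m.support, s y = y → Odd (m y)) :
    (∀ y ∈ m.support, s y ≠ y) ↔
      ∃ L : List D, (∀ x ∈ L, s x ≠ x) ∧
        m = (L.map (fun x => Finsupp.single x 1 + Finsupp.single (s x) 1)).sum := by
  constructor
  · intro hfix
    exact stmt5_aux s hs _ m rfl hm hfix
  · rintro ⟨L, hL, rfl⟩ y hy hyfix
    exact (Finsupp.mem_support_iff.mp hy) (stmt5_aux2 s hs y hyfix L hL)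
end

section
/- Let G be a group, V a finite-dimensional complex vector space, and ρ : G → GL(V) a representation admitting a nondegenerate G-invariant bilinear form B with B(x,y) = η·B(y,x) for a fixed η ∈ {1,-1}. Let χ : G → {±1} ⊂ ℂ^× be a character (group homomorphism with values ±1). Then the twisted representation χ⊗ρ (acting by g ↦ χ(g)ρ(g)) also admits a nondegenerate invariant bilinear form with the same symmetry sign η. If instead we consider the setting with a distinguished element z ∈ G and the modified symmetry condition B(x,y) = η·B(y, ρ(z)x) with invariance B(ρ(θ(g))x, ρ(g)y) = B(x,y) for an automorphism θ fixing the form structure, and χ satisfies χ(θ(g)) = χ(g)^{-1}, then the twist χ⊗ρ admits such a form with sign η·χ(z). -/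
/-- Twisting by a `±1`-valued character `χ` with `χ(θ g) = χ(g)⁻¹` takes a nondegenerate
form invariant for `ρ` (with twisted invariance and symmetry sign `η` relative to `z`)
to such a form for the twist `χ ⊗ ρ`, with sign `η · χ(z)`. -/
theorem stmt14 {G : Type*} [Group G] {V : Type*} [AddCommGroup V] [Module ℂ V]
    [FiniteDimensional ℂ V]
    (ρ : Representation ℂ G V) (θ : G ≃* G) (z : G)
    (B : V →ₗ[ℂ] V →ₗ[ℂ] ℂ) (η : ℂ) (hη : η = 1 ∨ η = -1)
    (hBnd : ∀ x : V, (∀ y : V, B x y = 0) → x = 0)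
    (hBinv : ∀ (g : G) (x y : V), B (ρ (θ g) x) (ρ g y) = B x y)
    (hBsym : ∀ x y : V, B x y = η * B y (ρ z x))
    (χ : G → ℂ) (hχhom : ∀ g h : G, χ (g * h) = χ g * χ h)
    (hχval : ∀ g : G, χ g = 1 ∨ χ g = -1)
    (hχθ : ∀ g : G, χ (θ g) = (χ g)⁻¹) :
    ∃ B' : V →ₗ[ℂ] V →ₗ[ℂ] ℂ,
      (∀ x : V, (∀ y : V, B' x y = 0) → x = 0) ∧
      (∀ (g : G) (x y : V), B' (χ (θ g) • ρ (θ g) x) (χ g • ρ g y) = B' x y) ∧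
      (∀ x y : V, B' x y = (η * χ z) * B' y (χ z • ρ z x)) := by
  refine ⟨B, hBnd, ?_, ?_⟩
  · intro g x y
    have hne : χ g ≠ 0 := by rcases hχval g with h | h <;> simp [h]
    simp only [map_smul, LinearMap.smul_apply, smul_eq_mul, hχθ g]
    rw [hBinv]
    field_simp
  · intro x y
    have hsq : χ z * χ z = 1 := by rcases hχval z with h | h <;> simp [h] <;> ring
    simp only [map_smul, smul_eq_mul]
    rw [hBsym x y]
    ring_nf
    rw [sq, hsq, mul_one]
end

section
/- Let (aᵢ, bᵢ) for i = 1, ..., n be a proper ladder of integer pairs: aᵢ ≤ bᵢ, a₁ > ... > a_n, b₁ > ... > b_n, and a_i ≤ b_{i+1} + 1 for all i < n (so consecutive segments are linked). Suppose the ladder is self-dual: (a_j, b_j)^∨ := (-b_j, -a_j) equals (a_{n+1-j}, b_{n+1-j}) for all j. Suppose n > 1. Then the segments Δ_n = [a_n, b_n] and Δ_{n-1} = [a_{n-1}, b_{n-1}] satisfy: any segment Δ = [a, b] with b = b_n and a ≤ a_n (containing Δ_n with the same end) is linked with Δ_{n-1} and precedes it (Δ ≺ Δ_{n-1}). -/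
def SegLinked (a₁ b₁ a₂ b₂ : ℤ) : Prop :=
  ¬ Set.Icc a₁ b₁ ⊆ Set.Icc a₂ b₂ ∧ ¬ Set.Icc a₂ b₂ ⊆ Set.Icc a₁ b₁ ∧
    ∃ c d : ℤ, Set.Icc a₁ b₁ ∪ Set.Icc a₂ b₂ = Set.Icc c d

def SegPrec (a₁ b₁ a₂ b₂ : ℤ) : Prop :=
  SegLinked a₁ b₁ a₂ b₂ ∧ a₁ < a₂

/-- In a self-dual proper ladder (indices `0,…,n-1`), any segment containing the last
segment with the same end precedes the penultimate segment. -/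
theorem stmt16 (n : ℕ) (hn : 1 < n) (a b : ℕ → ℤ)
    (hseg : ∀ i < n, a i ≤ b i)
    (hlad : ∀ i, i + 1 < n → a (i + 1) < a i ∧ b (i + 1) < b i)
    (hlink : ∀ i, i + 1 < n → a i ≤ b (i + 1) + 1)
    (hdual : ∀ j < n, -(b j) = a (n - 1 - j) ∧ -(a j) = b (n - 1 - j)) :
    ∀ A : ℤ, A ≤ a (n - 1) → SegPrec A (b (n - 1)) (a (n - 2)) (b (n - 2)) := by
  intro A hA
  have h2 : n - 2 + 1 = n - 1 := by omega
  have h1 : n - 2 + 1 < n := by omega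
  have hl := hlad (n - 2) h1
  have hk := hlink (n - 2) h1
  rw [h2] at hl hk
  have hs1 := hseg (n - 1) (by omega)
  have hs2 := hseg (n - 2) (by omega)
  obtain ⟨hla, hlb⟩ := hl
  refine ⟨⟨?_, ?_, A, b (n - 2), ?_⟩, by omega⟩
  · intro h
    have := h (Set.mem_Icc.mpr ⟨le_refl A, by omega⟩)
    simp [Set.mem_Icc] at this; omega
  · intro h
    have := h (Set.mem_Icc.mpr ⟨hs2, le_refl _⟩)
    simp [Set.mem_Icc] at this; omega
  · ext x; simp [Set.mem_Icc]; omega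
end
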